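/- The predictor's strategy g* is minimax optimal: inf_{z ∈ Z} (1/n)·∑_{i=1}^n z_i g*_i = V; in particular, for every z ∈ Z one has (1/n)·∑_{i=1}^n z_i g*_i ≥ V. -/

import Mathlib

open Finset

/-- The minimax optimal predictor strategy. -/
noncomputable def gstar (a : ℕ → ℝ) (v : ℕ) : ℕ → ℝ :=
  fun i => if i ≤ v then Real.sign (a i) else a i / |a v|

lemma sgn_mul_self {x : ℝ} (hx : x ≠ 0) : Real.sign x * x = |x| := by
  rcases hx.lt_or_gt with h | h
  · rw [Real.sign_of_neg h, abs_of_neg h]; ring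
  · rw [Real.sign_of_pos h, abs_of_pos h]; ring

lemma sgn_sq {x : ℝ} (hx : x ≠ 0) : Real.sign x * Real.sign x = 1 := by
  rcases hx.lt_or_gt with h | h
  · rw [Real.sign_of_neg h]; ring
  · rw [Real.sign_of_pos h]; ring

lemma sgn_eq_div {x : ℝ} (hx : x ≠ 0) : Real.sign x = x / |x| := by
  rcases hx.lt_or_gt with h | h
  · rw [Real.sign_of_neg h, abs_of_neg h, div_neg, div_self hx]
  · rw [Real.sign_of_pos h, abs_of_pos h, div_self hx]

lemma abs_sgn_le (x : ℝ) : |Real.sign x| ≤ 1 := by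
  rcases lt_trichotomy x 0 with h | h | h
  · rw [Real.sign_of_neg h]; norm_num
  · rw [h, Real.sign_zero]; norm_num
  · rw [Real.sign_of_pos h]; norm_num

/-- The predictor's strategy g* is minimax optimal. -/
theorem gstar_minimax_optimal
    (n : ℕ) (hn : 1 ≤ n) (a : ℕ → ℝ)
    (hord : ∀ i j : ℕ, 1 ≤ i → i ≤ j → j ≤ n → |a j| ≤ |a i|)
    (lam : ℝ) (hlam_pos : 0 < lam)
    (hlam_le : lam ≤ (1 / (n : ℝ)) * ∑ i ∈ Icc 1 n, |a i|)
    (v : ℕ) (hv1 : 1 ≤ v) (hvn : v ≤ n)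
    (hv_ge : lam ≤ (1 / (n : ℝ)) * ∑ j ∈ Icc 1 v, |a j|)
    (hv_min : ∀ i : ℕ, 1 ≤ i → i < v → (1 / (n : ℝ)) * ∑ j ∈ Icc 1 i, |a j| < lam)
    (V : ℝ)
    (hV : V = ((v : ℝ) - 1) / n +
        (lam - (1 / (n : ℝ)) * ∑ i ∈ Icc 1 (v - 1), |a i|) / |a v|) :
    sInf {y : ℝ | ∃ z : ℕ → ℝ, (∀ i ∈ Icc 1 n, |z i| ≤ 1) ∧
        lam ≤ (1 / (n : ℝ)) * ∑ i ∈ Icc 1 n, z i * a i ∧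
        y = (1 / (n : ℝ)) * ∑ i ∈ Icc 1 n, z i * gstar a v i} = V ∧
    (∀ z : ℕ → ℝ, (∀ i ∈ Icc 1 n, |z i| ≤ 1) →
        lam ≤ (1 / (n : ℝ)) * ∑ i ∈ Icc 1 n, z i * a i →
        V ≤ (1 / (n : ℝ)) * ∑ i ∈ Icc 1 n, z i * gstar a v i) := by
  obtain ⟨w, rfl⟩ : ∃ w, v = w + 1 := ⟨v - 1, by omega⟩
  simp only [Nat.add_sub_cancel] at hV
  have hnpos : (0 : ℝ) < n := by exact_mod_cast hn
  have hSsucc : ∑ i ∈ Icc 1 (w+1), |a i| = (∑ i ∈ Icc 1 w, |a i|) + |a (w+1)| :=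
    Finset.sum_Icc_succ_top (by omega) _
  have hge : (n : ℝ) * lam ≤ ∑ i ∈ Icc 1 (w+1), |a i| := by
    rw [one_div, inv_mul_eq_div, le_div_iff₀ hnpos] at hv_ge; linarith
  have hlt : ∑ i ∈ Icc 1 w, |a i| < (n : ℝ) * lam := by
    rcases Nat.eq_zero_or_pos w with hw | hw
    · subst hw; simp; positivity
    · have := hv_min w hw (by omega)
      rw [one_div, inv_mul_eq_div, div_lt_iff₀ hnpos] at this; linarith
  have hA : 0 < |a (w+1)| := by
    have h1 : ∑ i ∈ Icc 1 w, |a i| < ∑ i ∈ Icc 1 (w+1), |a i| := lt_of_lt_of_le hlt hge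
    rw [hSsucc] at h1; linarith
  have hne : ∀ i, 1 ≤ i → i ≤ w + 1 → a i ≠ 0 := by
    intro i h1 h2 h0
    have := hord i (w+1) h1 h2 hvn
    rw [h0, abs_zero] at this; linarith
  have keysplit : ∀ f : ℕ → ℝ,
      ∑ i ∈ Icc 1 n, f i = ∑ i ∈ Icc 1 (w+1), f i + ∑ i ∈ Ioc (w+1) n, f i := by
    intro f
    rw [show Icc 1 n = Ioc 0 n from Finset.Icc_add_one_left_eq_Ioc 0 n,
        show Icc 1 (w+1) = Ioc 0 (w+1) from Finset.Icc_add_one_left_eq_Ioc 0 (w+1)]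
    exact (Finset.sum_Ioc_consecutive f (Nat.zero_le _) hvn).symm
  have hVn : V * n = (w : ℝ) + ((n : ℝ) * lam - ∑ i ∈ Icc 1 w, |a i|) / |a (w+1)| := by
    rw [hV]; field_simp; push_cast; ring
  -- Part 2: lower bound
  have lower : ∀ z : ℕ → ℝ, (∀ i ∈ Icc 1 n, |z i| ≤ 1) →
      lam ≤ (1 / (n : ℝ)) * ∑ i ∈ Icc 1 n, z i * a i →
      V ≤ (1 / (n : ℝ)) * ∑ i ∈ Icc 1 n, z i * gstar a (w+1) i := by
    intro z hz hfeas
    have hT : (n : ℝ) * lam ≤ ∑ i ∈ Icc 1 n, z i * a i := by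
      rw [one_div, inv_mul_eq_div, le_div_iff₀ hnpos] at hfeas; linarith
    rw [one_div, inv_mul_eq_div, le_div_iff₀ hnpos]
    -- pointwise bound on Icc 1 (w+1)
    have hpoint : ∀ i ∈ Icc 1 (w+1),
        1 - |a i| / |a (w+1)| + z i * a i / |a (w+1)| ≤ z i * gstar a (w+1) i := by
      intro i hi
      rw [mem_Icc] at hi
      have hbA : |a (w+1)| ≤ |a i| := hord i (w+1) hi.1 hi.2 hvn
      have hbpos : 0 < |a i| := lt_of_lt_of_le hA hbA
      have hzi : |z i| ≤ 1 := hz i (mem_Icc.2 ⟨hi.1, le_trans hi.2 hvn⟩)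
      have h1 : z i * a i ≤ |a i| := by
        calc z i * a i ≤ |z i * a i| := le_abs_self _
          _ = |z i| * |a i| := abs_mul _ _
          _ ≤ 1 * |a i| := mul_le_mul_of_nonneg_right hzi (abs_nonneg _)
          _ = |a i| := one_mul _
      have hg : gstar a (w+1) i = a i / |a i| := by
        unfold gstar
        rw [if_pos hi.2, sgn_eq_div (hne i hi.1 hi.2)]
      rw [hg, show z i * (a i / |a i|) = z i * a i / |a i| from by ring,
        show (1 : ℝ) - |a i| / |a (w+1)| + z i * a i / |a (w+1)|
            = (|a (w+1)| - |a i| + z i * a i) / |a (w+1)| from by field_simp,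
        div_le_div_iff₀ hA hbpos]
      nlinarith [mul_nonneg (sub_nonneg.2 h1) (sub_nonneg.2 hbA)]
    have hsum1 : ((w : ℝ) + 1) - (∑ i ∈ Icc 1 (w+1), |a i|) / |a (w+1)|
          + (∑ i ∈ Icc 1 (w+1), z i * a i) / |a (w+1)|
        ≤ ∑ i ∈ Icc 1 (w+1), z i * gstar a (w+1) i := by
      have hs := Finset.sum_le_sum hpoint
      have e : ∑ i ∈ Icc 1 (w+1), (1 - |a i| / |a (w+1)| + z i * a i / |a (w+1)|)
          = ((w : ℝ) + 1) - (∑ i ∈ Icc 1 (w+1), |a i|) / |a (w+1)|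
            + (∑ i ∈ Icc 1 (w+1), z i * a i) / |a (w+1)| := by
        rw [Finset.sum_add_distrib, Finset.sum_sub_distrib, ← Finset.sum_div,
          ← Finset.sum_div, Finset.sum_const, Nat.card_Icc]
        simp only [nsmul_eq_mul, mul_one, Nat.add_sub_cancel]
        push_cast
        ring
      rw [e] at hs
      exact hs
    have hsum2 : ∑ i ∈ Ioc (w+1) n, z i * gstar a (w+1) i
        = (∑ i ∈ Ioc (w+1) n, z i * a i) / |a (w+1)| := by
      rw [Finset.sum_div]
      refine Finset.sum_congr rfl ?_
      intro i hi
      rw [mem_Ioc] at hi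
      unfold gstar
      rw [if_neg (by omega)]
      ring
    have hstep : V * n ≤ ((w : ℝ) + 1) - (∑ i ∈ Icc 1 (w+1), |a i|) / |a (w+1)|
        + (∑ i ∈ Icc 1 n, z i * a i) / |a (w+1)| := by
      rw [hVn, hSsucc, add_div, div_self (ne_of_gt hA), sub_div]
      have h4 : ((n : ℝ) * lam) / |a (w+1)| ≤ (∑ i ∈ Icc 1 n, z i * a i) / |a (w+1)| := by
        gcongr
      linarith
    calc V * n ≤ ((w : ℝ) + 1) - (∑ i ∈ Icc 1 (w+1), |a i|) / |a (w+1)|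
        + (∑ i ∈ Icc 1 n, z i * a i) / |a (w+1)| := hstep
      _ = (((w : ℝ) + 1) - (∑ i ∈ Icc 1 (w+1), |a i|) / |a (w+1)|
            + (∑ i ∈ Icc 1 (w+1), z i * a i) / |a (w+1)|)
          + (∑ i ∈ Ioc (w+1) n, z i * a i) / |a (w+1)| := by
        rw [keysplit (fun i => z i * a i), add_div]; ring
      _ ≤ ∑ i ∈ Icc 1 (w+1), z i * gstar a (w+1) i
          + ∑ i ∈ Ioc (w+1) n, z i * gstar a (w+1) i := by
        rw [hsum2]; exact add_le_add_left hsum1 _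
      _ = ∑ i ∈ Icc 1 n, z i * gstar a (w+1) i := (keysplit _).symm
  refine ⟨?_, lower⟩
  -- the witness z0
  set c : ℝ := ((n : ℝ) * lam - ∑ i ∈ Icc 1 w, |a i|) / |a (w+1)| with hc
  have hc0 : 0 < c := div_pos (by linarith) hA
  have hc1 : c ≤ 1 := by rw [hc, div_le_one hA]; linarith
  set z0 : ℕ → ℝ := fun i =>
    if i ≤ w then Real.sign (a i) else if i = w + 1 then Real.sign (a (w+1)) * c else 0
    with hz0def
  have hz0bd : ∀ i ∈ Icc 1 n, |z0 i| ≤ 1 := by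
    intro i _
    by_cases h1 : i ≤ w
    · simp only [hz0def, if_pos h1]; exact abs_sgn_le _
    · by_cases h2 : i = w + 1
      · simp only [hz0def, if_neg h1, if_pos h2, abs_mul]
        calc |Real.sign (a (w+1))| * |c| ≤ 1 * 1 := by
              apply mul_le_mul (abs_sgn_le _) _ (abs_nonneg _) zero_le_one
              rw [abs_of_pos hc0]; exact hc1
          _ = 1 := one_mul 1
      · simp [hz0def, if_neg h1, if_neg h2]
  have hsum_a : ∑ i ∈ Icc 1 n, z0 i * a i = (n : ℝ) * lam := by
    rw [keysplit (fun i => z0 i * a i),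
      Finset.sum_Icc_succ_top (by omega : 1 ≤ w + 1) (fun i => z0 i * a i)]
    have e1 : ∑ i ∈ Icc 1 w, z0 i * a i = ∑ i ∈ Icc 1 w, |a i| := by
      refine Finset.sum_congr rfl ?_
      intro i hi
      rw [mem_Icc] at hi
      simp only [hz0def, if_pos hi.2]
      exact sgn_mul_self (hne i hi.1 (by omega))
    have e2 : z0 (w+1) * a (w+1) = (n : ℝ) * lam - ∑ i ∈ Icc 1 w, |a i| := by
      simp only [hz0def, if_neg (by omega : ¬ w + 1 ≤ w), if_pos rfl, if_true, eq_self_iff_true]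
      rw [show Real.sign (a (w+1)) * c * a (w+1) = Real.sign (a (w+1)) * a (w+1) * c from by ring,
        sgn_mul_self (hne (w+1) (by omega) le_rfl), hc]
      field_simp
    have e3 : ∑ i ∈ Ioc (w+1) n, z0 i * a i = 0 := by
      refine Finset.sum_eq_zero ?_
      intro i hi
      rw [mem_Ioc] at hi
      simp only [hz0def, if_neg (by omega : ¬ i ≤ w), if_neg (by omega : ¬ i = w + 1)]
      ring
    rw [e1, e2, e3]; ring
  have hsum_g : ∑ i ∈ Icc 1 n, z0 i * gstar a (w+1) i = (w : ℝ) + c := by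
    rw [keysplit (fun i => z0 i * gstar a (w+1) i),
      Finset.sum_Icc_succ_top (by omega : 1 ≤ w + 1) (fun i => z0 i * gstar a (w+1) i)]
    have e1 : ∑ i ∈ Icc 1 w, z0 i * gstar a (w+1) i = ∑ i ∈ Icc 1 w, (1 : ℝ) := by
      refine Finset.sum_congr rfl ?_
      intro i hi
      rw [mem_Icc] at hi
      simp only [hz0def, if_pos hi.2]
      unfold gstar
      rw [if_pos (by omega : i ≤ w + 1)]
      exact sgn_sq (hne i hi.1 (by omega))
    have e2 : z0 (w+1) * gstar a (w+1) (w+1) = c := by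
      simp only [hz0def, if_neg (by omega : ¬ w + 1 ≤ w), if_pos rfl, if_true, eq_self_iff_true]
      unfold gstar
      rw [if_pos le_rfl,
        show Real.sign (a (w+1)) * c * Real.sign (a (w+1))
          = Real.sign (a (w+1)) * Real.sign (a (w+1)) * c from by ring,
        sgn_sq (hne (w+1) (by omega) le_rfl), one_mul]
    have e3 : ∑ i ∈ Ioc (w+1) n, z0 i * gstar a (w+1) i = 0 := by
      refine Finset.sum_eq_zero ?_
      intro i hi
      rw [mem_Ioc] at hi
      simp only [hz0def, if_neg (by omega : ¬ i ≤ w), if_neg (by omega : ¬ i = w + 1)]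
      ring
    rw [e1, e2, e3, Finset.sum_const, Nat.card_Icc]
    simp
  have memV : V ∈ {y : ℝ | ∃ z : ℕ → ℝ, (∀ i ∈ Icc 1 n, |z i| ≤ 1) ∧
      lam ≤ (1 / (n : ℝ)) * ∑ i ∈ Icc 1 n, z i * a i ∧
      y = (1 / (n : ℝ)) * ∑ i ∈ Icc 1 n, z i * gstar a (w+1) i} := by
    refine ⟨z0, hz0bd, ?_, ?_⟩
    · rw [hsum_a]; field_simp; exact le_rfl
    · rw [hsum_g]
      have : V * n = (w : ℝ) + c := by rw [hVn, hc]
      field_simp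
      linarith [this]
  apply le_antisymm
  · exact csInf_le ⟨V, fun y hy => by
      obtain ⟨z, h1, h2, rfl⟩ := hy; exact lower z h1 h2⟩ memV
  · refine le_csInf ⟨V, memV⟩ ?_
    rintro y ⟨z, h1, h2, rfl⟩
    exact lower z h1 h2
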